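/- Let T be a finite tree of order n ≥ 2 with l leaves and s support vertices. Then γ_{-1}^d(T) ≥ (3n - l - s + 4)/8 and γ_0^d(T) ≥ (3n - l - s + 4)/6. -/

import Mathlib

open Finset

variable {V : Type*}

/-- `degIn G S v` is the number of neighbors that `v` has in `S` (denoted `δ_S(v)`). -/
def degIn [Fintype V] [DecidableEq V] (G : SimpleGraph V) [DecidableRel G.Adj]
    (S : Finset V) (v : V) : ℕ :=
  (G.neighborFinset v ∩ S).card

/-- A nonempty set `S` is a defensive `k`-alliance in `G` if every vertex of `S` has at least
`k` more neighbors inside `S` than outside. -/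
def IsDefensiveKAlliance [Fintype V] [DecidableEq V] (G : SimpleGraph V) [DecidableRel G.Adj]
    (k : ℤ) (S : Finset V) : Prop :=
  S.Nonempty ∧ ∀ v ∈ S, (degIn G Sᶜ v : ℤ) + k ≤ (degIn G S v : ℤ)

/-- The defensive `k`-alliance number: minimum cardinality of a defensive `k`-alliance. -/
noncomputable def defensiveAllianceNum [Fintype V] [DecidableEq V] (G : SimpleGraph V)
    [DecidableRel G.Adj] (k : ℤ) : ℕ :=
  sInf {m : ℕ | ∃ S : Finset V, IsDefensiveKAlliance G k S ∧ S.card = m}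

/-- `S` is a dominating set: every vertex outside `S` has a neighbor in `S`. -/
def IsDominatingSet (G : SimpleGraph V) (S : Finset V) : Prop :=
  ∀ v, v ∉ S → ∃ u ∈ S, G.Adj u v

/-- A global defensive `k`-alliance is a defensive `k`-alliance which is also dominating. -/
def IsGlobalDefensiveKAlliance [Fintype V] [DecidableEq V] (G : SimpleGraph V)
    [DecidableRel G.Adj] (k : ℤ) (S : Finset V) : Prop :=
  IsDefensiveKAlliance G k S ∧ IsDominatingSet G S

/-- The global defensive `k`-alliance number `γ_k^d(G)`. -/
noncomputable def globalDefensiveAllianceNum [Fintype V] [DecidableEq V] (G : SimpleGraph V)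
    [DecidableRel G.Adj] (k : ℤ) : ℕ :=
  sInf {m : ℕ | ∃ S : Finset V, IsGlobalDefensiveKAlliance G k S ∧ S.card = m}

/-!
Let `S` be a global defensive `k`-alliance, `k ≤ 0`, in a graph without isolated vertices, and
count degrees with weights. A vertex `u ∉ S` has a neighbour in `S`, so `2 deg u + 3 δ_S(u) ≥ 7`
unless `u` is a leaf (then `≥ 5`). A vertex `v ∈ S` has `δ_S(v) ≥ δ_{Sᶜ}(v) + k`, whence
`2 deg v + [v is a support vertex] ≥ 3 δ_{Sᶜ}(v) + (leaves of Sᶜ at v) + 2k + 1`. Summing, the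
terms `3 δ` cancel (both count the edges between `S` and `Sᶜ`), every leaf of `Sᶜ` is counted at
its neighbour in `S`, and what remains is `7n ≤ (6 - 2k)|S| + 4|E| + l + s`. In a tree
`|E| = n - 1`.
-/

open SimpleGraph

section
variable [Fintype V] [DecidableEq V] {G : SimpleGraph V} [DecidableRel G.Adj]

variable (G) in
def leafFinset : Finset V :=
  univ.filter fun v => G.degree v = 1

variable (G) in
def supportVertexFinset : Finset V :=
  univ.filter fun v => ∃ u ∈ G.neighborFinset v, G.degree u = 1

lemma degIn_mono {S T : Finset V} (h : S ⊆ T) (v : V) : degIn G S v ≤ degIn G T v :=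
  card_le_card (inter_subset_inter_left h)

variable (G) in
lemma degIn_add_degIn_compl (S : Finset V) (v : V) :
    degIn G S v + degIn G Sᶜ v = G.degree v := by
  rw [degIn, degIn, ← card_union_of_disjoint
    (disjoint_compl_right.mono inter_subset_right inter_subset_right),
    ← inter_union_distrib_left, union_compl, inter_univ, card_neighborFinset_eq_degree]

variable (G) in
lemma sum_degIn_comm (A B : Finset V) :
    ∑ v ∈ A, degIn G B v = ∑ u ∈ B, degIn G A u := by
  simp only [degIn, card_eq_sum_ones, sum_filter, inter_comm (G.neighborFinset _),
    ← filter_mem_eq_inter, mem_neighborFinset]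
  rw [sum_comm]
  simp only [adj_comm]

lemma degIn_leafFinset_eq_zero {v : V} (hv : v ∉ supportVertexFinset G) :
    degIn G (leafFinset G) v = 0 := by
  simp only [supportVertexFinset, mem_filter, mem_univ, true_and, not_exists, not_and] at hv
  simpa [degIn, eq_empty_iff_forall_notMem, leafFinset] using hv

lemma one_le_degIn_of_isDominatingSet {S : Finset V} (hS : IsDominatingSet G S) {u : V}
    (hu : u ∉ S) : 1 ≤ degIn G S u := by
  obtain ⟨w, hw, hadj⟩ := hS u hu
  exact card_pos.mpr ⟨w, mem_inter.mpr ⟨(mem_neighborFinset G u w).mpr hadj.symm, hw⟩⟩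

lemma seven_le_two_mul_degree_add_three_mul_degIn {S : Finset V} (hS : IsDominatingSet G S)
    {u : V} (hu : u ∉ S) :
    7 ≤ 2 * G.degree u + 3 * degIn G S u + 2 * (if u ∈ leafFinset G then 1 else 0) := by
  have hS := one_le_degIn_of_isDominatingSet hS hu
  have hdeg := degIn_add_degIn_compl G S u
  by_cases hleaf : G.degree u = 1 <;> simp [leafFinset, hleaf] <;> omega

lemma three_mul_degIn_compl_add_le_two_mul_degree {k : ℤ} (hk : k ≤ 0) {S : Finset V} {v : V}
    (hdeg : 0 < G.degree v) (hv : (degIn G Sᶜ v : ℤ) + k ≤ degIn G S v) :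
    3 * (degIn G Sᶜ v : ℤ) + degIn G (Sᶜ ∩ leafFinset G) v + 2 * k + 1 ≤
      2 * G.degree v + (if v ∈ supportVertexFinset G then 1 else 0) := by
  have hsplit := degIn_add_degIn_compl G S v
  by_cases hsupp : v ∈ supportVertexFinset G
  · have := degIn_mono (G := G) (inter_subset_left (s₁ := Sᶜ) (s₂ := leafFinset G)) v
    simp only [hsupp, if_true]
    omega
  · have := (degIn_mono (G := G) (inter_subset_right (s₁ := Sᶜ) (s₂ := leafFinset G)) v).trans_eq
      (degIn_leafFinset_eq_zero hsupp)
    simp only [hsupp, if_false]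
    omega

lemma IsGlobalDefensiveKAlliance.seven_mul_card_le {k : ℤ} (hk : k ≤ 0)
    (hdeg : ∀ v, 0 < G.degree v) {S : Finset V} (hS : IsGlobalDefensiveKAlliance G k S) :
    7 * (Fintype.card V : ℤ) ≤
      (6 - 2 * k) * #S + 4 * #G.edgeFinset + #(leafFinset G) + #(supportVertexFinset G) := by
  obtain ⟨⟨-, hdef⟩, hdom⟩ := hS
  set e := ∑ u ∈ Sᶜ, degIn G S u
  have hinside : 3 * (e : ℤ) + #(Sᶜ ∩ leafFinset G) + (2 * k + 1) * #S ≤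
      2 * ∑ v ∈ S, (G.degree v : ℤ) + #(supportVertexFinset G) := by
    have hsum := sum_le_sum fun v hv =>
      three_mul_degIn_compl_add_le_two_mul_degree hk (hdeg v) (hdef v hv)
    have hleaves : #(Sᶜ ∩ leafFinset G) ≤ ∑ v ∈ S, degIn G (Sᶜ ∩ leafFinset G) v := by
      rw [sum_degIn_comm, card_eq_sum_ones]
      exact sum_le_sum fun u hu =>
        one_le_degIn_of_isDominatingSet hdom (mem_compl.mp (mem_inter.mp hu).1)
    have hsupp : #(S ∩ supportVertexFinset G) ≤ #(supportVertexFinset G) :=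
      card_le_card inter_subset_right
    have he : ∑ v ∈ S, degIn G Sᶜ v = e := sum_degIn_comm G S Sᶜ
    simp only [sum_add_distrib, ← mul_sum, sum_const, sum_boole, filter_mem_eq_inter,
      nsmul_eq_mul] at hsum
    push_cast [← he] at hsum hleaves hsupp ⊢
    linarith
  have houtside : 7 * #Sᶜ ≤ 2 * ∑ u ∈ Sᶜ, G.degree u + 3 * e + 2 * #(Sᶜ ∩ leafFinset G) := by
    have := sum_le_sum fun u hu =>
      seven_le_two_mul_degree_add_three_mul_degIn hdom (mem_compl.mp hu)
    simpa only [sum_add_distrib, ← mul_sum, sum_const, smul_eq_mul, mul_comm _ 7, sum_boole,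
      filter_mem_eq_inter, Nat.cast_id] using this
  have hdegsum : ∑ v ∈ S, G.degree v + ∑ u ∈ Sᶜ, G.degree u = 2 * #G.edgeFinset := by
    rw [sum_add_sum_compl, sum_degrees_eq_twice_card_edges]
  have hcard : #S + #Sᶜ = Fintype.card V := card_add_card_compl S
  have hleaf : #(Sᶜ ∩ leafFinset G) ≤ #(leafFinset G) := card_le_card inter_subset_right
  zify at houtside hdegsum hcard hleaf
  linarith

lemma isGlobalDefensiveKAlliance_univ [Nonempty V] {k : ℤ} (hk : k ≤ 0) :
    IsGlobalDefensiveKAlliance G k univ :=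
  ⟨⟨univ_nonempty, fun v _ => by simp [degIn]; omega⟩, fun v hv => absurd (mem_univ v) hv⟩

lemma exists_card_eq_globalDefensiveAllianceNum [Nonempty V] {k : ℤ} (hk : k ≤ 0) :
    ∃ S, IsGlobalDefensiveKAlliance G k S ∧ #S = globalDefensiveAllianceNum G k :=
  Nat.sInf_mem (s := {m | ∃ S, IsGlobalDefensiveKAlliance G k S ∧ #S = m})
    ⟨#univ, univ, isGlobalDefensiveKAlliance_univ hk, rfl⟩

lemma SimpleGraph.IsTree.three_mul_card_add_four_le (hT : G.IsTree) (hn : 2 ≤ Fintype.card V)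
    {k : ℤ} (hk : k ≤ 0) :
    3 * (Fintype.card V : ℤ) + 4 - #(leafFinset G) - #(supportVertexFinset G) ≤
      (6 - 2 * k) * globalDefensiveAllianceNum G k := by
  have : Nontrivial V := Fintype.one_lt_card_iff_nontrivial.mp hn
  obtain ⟨S, hS, hcard⟩ := exists_card_eq_globalDefensiveAllianceNum (G := G) hk
  have hbound := hS.seven_mul_card_le hk fun v =>
    hT.connected.preconnected.degree_pos_of_nontrivial v
  have hedges := hT.card_edgeFinset
  zify at hedges
  rw [← hcard]
  linarith

end

/-- Theorem: for a tree `T` of order `n ≥ 2` with `l` leaves and `s` support vertices,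
`γ_{-1}^d(T) ≥ (3n - l - s + 4)/8` and `γ_0^d(T) ≥ (3n - l - s + 4)/6`. -/
theorem tree_globalDefensiveAllianceNum_leaves_support [Fintype V] [DecidableEq V]
    (G : SimpleGraph V) [DecidableRel G.Adj] (hT : G.IsTree) (hn : 2 ≤ Fintype.card V)
    (l s : ℕ)
    (hl : l = (univ.filter fun v => G.degree v = 1).card)
    (hs : s = (univ.filter fun v => ∃ u ∈ G.neighborFinset v, G.degree u = 1).card) :
    (3 * (Fintype.card V : ℚ) - (l : ℚ) - (s : ℚ) + 4) / 8 ≤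
        (globalDefensiveAllianceNum G (-1) : ℚ) ∧
      (3 * (Fintype.card V : ℚ) - (l : ℚ) - (s : ℚ) + 4) / 6 ≤
        (globalDefensiveAllianceNum G 0 : ℚ) := by
  have h₁ := (Int.cast_le (R := ℚ)).mpr (hT.three_mul_card_add_four_le hn (k := -1) (by simp))
  have h₀ := (Int.cast_le (R := ℚ)).mpr (hT.three_mul_card_add_four_le hn (k := 0) le_rfl)
  unfold leafFinset supportVertexFinset at h₁ h₀
  subst hl hs
  push_cast at h₁ h₀
  constructor <;> rw [div_le_iff₀ (by norm_num)] <;> linarith
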